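/- Let U ⊆ ℂ be open, let u : ℂ → ℝ and a₁, a₂, b₁, b₂, σ : ℂ → ℂ be ℝ-differentiable on U. Let A_p := A_p(e^{u}/√2, a₁, a₂, b₁, b₂) and let B_k be the 5×5 complex matrix whose only nonzero entries are (1,2) ↦ −i·∂̄u, (2,1) ↦ i·∂̄u, (3,4) ↦ conj(σ), (4,3) ↦ −conj(σ). Then on U the matrix M := ∂̄A_p + (B_k·A_p − A_p·B_k) has all entries zero except: M[1,3] = −A₁, M[1,4] = −A₂, M[2,3] = −i·B₁, M[2,4] = −i·B₂, M[3,1] = A₁, M[4,1] = A₂, M[3,2] = i·B₁, M[4,2] = i·B₂, where A₁ := ∂̄a₁ + (∂̄u)·b₁ + a₂·conj(σ), A₂ := ∂̄a₂ + (∂̄u)·b₂ − a₁·conj(σ), B₁ := ∂̄b₁ + (∂̄u)·a₁ + b₂·conj(σ), B₂ := ∂̄b₂ + (∂̄u)·a₂ − b₁·conj(σ). (This computes the tension field of the Gauss map of a conformal immersion into S⁴ with respect to the normal metric.) -/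

import Mathlib

/-!
The Wirtinger derivative `∂̄` commutes with `ℂ`-linear maps, so it acts entrywise on `A_p` and
`∂̄A_p = A_p(∂̄r, ∂̄a₁, ∂̄a₂, ∂̄b₁, ∂̄b₂)`. For `r = e^u/√2` the chain rule gives `∂̄r = r ∂̄u`, and
these terms cancel exactly the `r`-entries of the commutator `[B_k, A_p]`; what remains is
`A_p(0, A₁, A₂, B₁, B₂)`.
-/

open Complex Matrix

noncomputable section

attribute [local instance] Matrix.normedAddCommGroup Matrix.normedSpace

/-- Wirtinger derivative ∂G := (1/2)(∂ₓG − i∂ᵧG). -/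
def wDz {E : Type*} [NormedAddCommGroup E] [NormedSpace ℂ E] (G : ℂ → E) (z : ℂ) : E :=
  (2⁻¹ : ℂ) • (fderiv ℝ G z 1 - Complex.I • fderiv ℝ G z Complex.I)

/-- Wirtinger derivative ∂̄G := (1/2)(∂ₓG + i∂ᵧG). -/
def wDzBar {E : Type*} [NormedAddCommGroup E] [NormedSpace ℂ E] (G : ℂ → E) (z : ℂ) : E :=
  (2⁻¹ : ℂ) • (fderiv ℝ G z 1 + Complex.I • fderiv ℝ G z Complex.I)

/-- The 𝔭-part matrix A_p(r, a₁, a₂, b₁, b₂). -/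
def Ap (r a₁ a₂ b₁ b₂ : ℂ) : Matrix (Fin 5) (Fin 5) ℂ :=
  !![0, -r, Complex.I * r, 0, 0;
     r, 0, 0, -a₁, -a₂;
     -(Complex.I * r), 0, 0, -(Complex.I * b₁), -(Complex.I * b₂);
     0, a₁, Complex.I * b₁, 0, 0;
     0, a₂, Complex.I * b₂, 0, 0]

/-- The 𝔨-part B_k of the Maurer–Cartan form of an adapted frame. -/
def BKfun (u : ℂ → ℝ) (σ : ℂ → ℂ) (z : ℂ) : Matrix (Fin 5) (Fin 5) ℂ :=
  !![0, 0, 0, 0, 0;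
     0, 0, -(Complex.I * wDzBar (fun w => (u w : ℂ)) z), 0, 0;
     0, Complex.I * wDzBar (fun w => (u w : ℂ)) z, 0, 0, 0;
     0, 0, 0, 0, (starRingEnd ℂ) (σ z);
     0, 0, 0, -((starRingEnd ℂ) (σ z)), 0]

theorem wDzBar_clm_comp {E F : Type*} [NormedAddCommGroup E] [NormedSpace ℂ E]
    [NormedAddCommGroup F] [NormedSpace ℂ F] (L : E →L[ℂ] F) {G : ℂ → E} {z : ℂ}
    (hG : DifferentiableAt ℝ G z) :
    wDzBar (fun w => L (G w)) z = L (wDzBar G z) := by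
  have hLG : fderiv ℝ (fun w => L (G w)) z = (L.restrictScalars ℝ).comp (fderiv ℝ G z) :=
    ((L.restrictScalars ℝ).hasFDerivAt.comp z hG.hasFDerivAt).fderiv
  simp [wDzBar, hLG]

theorem wDzBar_matrix_apply {m n : Type*} [Fintype m] [Fintype n]
    {F : ℂ → Matrix m n ℂ} {z : ℂ} (hF : DifferentiableAt ℝ F z) (i : m) (j : n) :
    wDzBar (fun w => F w i j) z = wDzBar F z i j :=
  wDzBar_clm_comp ((ContinuousLinearMap.proj (R := ℂ) (φ := fun _ : n => ℂ) j).comp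
    (ContinuousLinearMap.proj (R := ℂ) (φ := fun _ : m => n → ℂ) i)) hF

theorem wDzBar_const {E : Type*} [NormedAddCommGroup E] [NormedSpace ℂ E] (c : E) (z : ℂ) :
    wDzBar (fun _ => c) z = 0 := by
  simp [wDzBar]

theorem wDzBar_neg {E : Type*} [NormedAddCommGroup E] [NormedSpace ℂ E] (G : ℂ → E) (z : ℂ) :
    wDzBar (fun w => -G w) z = -wDzBar G z := by
  simp [wDzBar, add_comm]

theorem wDzBar_const_mul {f : ℂ → ℂ} {z : ℂ} (hf : DifferentiableAt ℝ f z) (c : ℂ) :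
    wDzBar (fun w => c * f w) z = c * wDzBar f z :=
  wDzBar_clm_comp (ContinuousLinearMap.mul ℂ ℂ c) hf

theorem wDzBar_ofReal_comp {g : ℝ → ℝ} {g' : ℝ} {u : ℂ → ℝ} {z : ℂ}
    (hg : HasDerivAt g g' (u z)) (hu : DifferentiableAt ℝ u z) :
    wDzBar (fun w => (g (u w) : ℂ)) z = g' * wDzBar (fun w => (u w : ℂ)) z := by
  have hgu : fderiv ℝ (fun w => (g (u w) : ℂ)) z = ofRealCLM.comp (g' • fderiv ℝ u z) :=
    (ofRealCLM.hasFDerivAt.comp z (hg.comp_hasFDerivAt z hu.hasFDerivAt)).fderiv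
  have hu' : fderiv ℝ (fun w => (u w : ℂ)) z = ofRealCLM.comp (fderiv ℝ u z) :=
    (ofRealCLM.hasFDerivAt.comp z hu.hasFDerivAt).fderiv
  simp only [wDzBar, hgu, hu', ContinuousLinearMap.comp_apply, _root_.smul_apply,
    ofRealCLM_apply, smul_eq_mul, ofReal_mul]
  ring

theorem DifferentiableAt.of_ofReal_comp {E : Type*} [NormedAddCommGroup E] [NormedSpace ℝ E]
    {u : E → ℝ} {z : E} (hu : DifferentiableAt ℝ (fun w => (u w : ℂ)) z) :
    DifferentiableAt ℝ u z := by
  have := reCLM.differentiableAt.comp z hu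
  rwa [show (reCLM ∘ fun w => (u w : ℂ)) = u from funext fun w => by simp] at this

theorem differentiableAt_Ap {r a₁ a₂ b₁ b₂ : ℂ → ℂ} {z : ℂ}
    (hr : DifferentiableAt ℝ r z) (ha₁ : DifferentiableAt ℝ a₁ z)
    (ha₂ : DifferentiableAt ℝ a₂ z) (hb₁ : DifferentiableAt ℝ b₁ z)
    (hb₂ : DifferentiableAt ℝ b₂ z) :
    DifferentiableAt ℝ (fun w => Ap (r w) (a₁ w) (a₂ w) (b₁ w) (b₂ w)) z := by
  refine differentiableAt_pi.mpr fun i => differentiableAt_pi.mpr fun j => ?_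
  fin_cases i <;> fin_cases j <;> simp [Ap] <;> fun_prop

theorem wDzBar_Ap {r a₁ a₂ b₁ b₂ : ℂ → ℂ} {z : ℂ}
    (hr : DifferentiableAt ℝ r z) (ha₁ : DifferentiableAt ℝ a₁ z)
    (ha₂ : DifferentiableAt ℝ a₂ z) (hb₁ : DifferentiableAt ℝ b₁ z)
    (hb₂ : DifferentiableAt ℝ b₂ z) :
    wDzBar (fun w => Ap (r w) (a₁ w) (a₂ w) (b₁ w) (b₂ w)) z
      = Ap (wDzBar r z) (wDzBar a₁ z) (wDzBar a₂ z) (wDzBar b₁ z) (wDzBar b₂ z) := by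
  ext i j
  rw [← wDzBar_matrix_apply (differentiableAt_Ap hr ha₁ ha₂ hb₁ hb₂)]
  fin_cases i <;> fin_cases j <;>
    simp [Ap, wDzBar_const, wDzBar_neg, wDzBar_const_mul hr, wDzBar_const_mul hb₁,
      wDzBar_const_mul hb₂]

def Bk (d s : ℂ) : Matrix (Fin 5) (Fin 5) ℂ :=
  !![0, 0, 0, 0, 0;
     0, 0, -(I * d), 0, 0;
     0, I * d, 0, 0, 0;
     0, 0, 0, 0, s;
     0, 0, 0, -s, 0]

theorem BKfun_eq_Bk (u : ℂ → ℝ) (σ : ℂ → ℂ) (z : ℂ) :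
    BKfun u σ z = Bk (wDzBar (fun w => (u w : ℂ)) z) (starRingEnd ℂ (σ z)) :=
  rfl

theorem Ap_mul_add_commutator_Bk (r d s a₁ a₂ b₁ b₂ da₁ da₂ db₁ db₂ : ℂ) :
    Ap (r * d) da₁ da₂ db₁ db₂ + (Bk d s * Ap r a₁ a₂ b₁ b₂ - Ap r a₁ a₂ b₁ b₂ * Bk d s)
      = Ap 0 (da₁ + d * b₁ + a₂ * s) (da₂ + d * b₂ - a₁ * s)
          (db₁ + d * a₁ + b₂ * s) (db₂ + d * a₂ - b₁ * s) := by
  ext i j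
  fin_cases i <;> fin_cases j <;> simp [Ap, Bk] <;> ring_nf <;> simp only [I_sq] <;> ring

theorem Ap_zero_left (a₁ a₂ b₁ b₂ : ℂ) :
    Ap 0 a₁ a₂ b₁ b₂
      = !![0, 0, 0, 0, 0;
           0, 0, 0, -a₁, -a₂;
           0, 0, 0, -(I * b₁), -(I * b₂);
           0, a₁, I * b₁, 0, 0;
           0, a₂, I * b₂, 0, 0] := by
  simp [Ap]

theorem tension_of_gauss_map_general
    (U : Set ℂ)
    (u : ℂ → ℝ) (a₁ a₂ b₁ b₂ σ : ℂ → ℂ)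
    (hu : ∀ z ∈ U, DifferentiableAt ℝ (fun w => (u w : ℂ)) z)
    (ha₁ : ∀ z ∈ U, DifferentiableAt ℝ a₁ z)
    (ha₂ : ∀ z ∈ U, DifferentiableAt ℝ a₂ z)
    (hb₁ : ∀ z ∈ U, DifferentiableAt ℝ b₁ z)
    (hb₂ : ∀ z ∈ U, DifferentiableAt ℝ b₂ z)
    (A₁ A₂ B₁ B₂ : ℂ → ℂ)
    (hA₁ : A₁ = fun z => wDzBar a₁ z + wDzBar (fun w => (u w : ℂ)) z * b₁ z
        + a₂ z * (starRingEnd ℂ) (σ z))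
    (hA₂ : A₂ = fun z => wDzBar a₂ z + wDzBar (fun w => (u w : ℂ)) z * b₂ z
        - a₁ z * (starRingEnd ℂ) (σ z))
    (hB₁ : B₁ = fun z => wDzBar b₁ z + wDzBar (fun w => (u w : ℂ)) z * a₁ z
        + b₂ z * (starRingEnd ℂ) (σ z))
    (hB₂ : B₂ = fun z => wDzBar b₂ z + wDzBar (fun w => (u w : ℂ)) z * a₂ z
        - b₁ z * (starRingEnd ℂ) (σ z)) :
    ∀ z ∈ U,
      wDzBar (fun w => Ap ((Real.exp (u w) / Real.sqrt 2 : ℝ) : ℂ)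
          (a₁ w) (a₂ w) (b₁ w) (b₂ w)) z
        + (BKfun u σ z * Ap ((Real.exp (u z) / Real.sqrt 2 : ℝ) : ℂ)
              (a₁ z) (a₂ z) (b₁ z) (b₂ z)
           - Ap ((Real.exp (u z) / Real.sqrt 2 : ℝ) : ℂ)
              (a₁ z) (a₂ z) (b₁ z) (b₂ z) * BKfun u σ z)
      = !![0, 0, 0, 0, 0;
           0, 0, 0, -A₁ z, -A₂ z;
           0, 0, 0, -(Complex.I * B₁ z), -(Complex.I * B₂ z);
           0, A₁ z, Complex.I * B₁ z, 0, 0;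
           0, A₂ z, Complex.I * B₂ z, 0, 0] := by
  intro z hz
  have hu' : DifferentiableAt ℝ u z := (hu z hz).of_ofReal_comp
  have hr : DifferentiableAt ℝ (fun w => ((Real.exp (u w) / Real.sqrt 2 : ℝ) : ℂ)) z := by
    fun_prop
  have hdr : wDzBar (fun w => ((Real.exp (u w) / Real.sqrt 2 : ℝ) : ℂ)) z
      = ((Real.exp (u z) / Real.sqrt 2 : ℝ) : ℂ) * wDzBar (fun w => (u w : ℂ)) z :=
    wDzBar_ofReal_comp ((Real.hasDerivAt_exp _).div_const _) hu'
  rw [wDzBar_Ap hr (ha₁ z hz) (ha₂ z hz) (hb₁ z hz) (hb₂ z hz), hdr, BKfun_eq_Bk,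
    Ap_mul_add_commutator_Bk, Ap_zero_left]
  subst hA₁ hA₂ hB₁ hB₂
  rfl

/-- the tension field of the Gauss map: the matrix
M = ∂̄A_𝔭 + [B_𝔨, A_𝔭] has the entries A₁, A₂, B₁, B₂ in the indicated positions
and vanishes elsewhere. -/
theorem tension_of_gauss_map
    (U : Set ℂ) (hU : IsOpen U)
    (u : ℂ → ℝ) (a₁ a₂ b₁ b₂ σ : ℂ → ℂ)
    (hu : ∀ z ∈ U, DifferentiableAt ℝ (fun w => (u w : ℂ)) z)
    (ha₁ : ∀ z ∈ U, DifferentiableAt ℝ a₁ z)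
    (ha₂ : ∀ z ∈ U, DifferentiableAt ℝ a₂ z)
    (hb₁ : ∀ z ∈ U, DifferentiableAt ℝ b₁ z)
    (hb₂ : ∀ z ∈ U, DifferentiableAt ℝ b₂ z)
    (hσ : ∀ z ∈ U, DifferentiableAt ℝ σ z)
    (A₁ A₂ B₁ B₂ : ℂ → ℂ)
    (hA₁ : A₁ = fun z => wDzBar a₁ z + wDzBar (fun w => (u w : ℂ)) z * b₁ z
        + a₂ z * (starRingEnd ℂ) (σ z))
    (hA₂ : A₂ = fun z => wDzBar a₂ z + wDzBar (fun w => (u w : ℂ)) z * b₂ z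
        - a₁ z * (starRingEnd ℂ) (σ z))
    (hB₁ : B₁ = fun z => wDzBar b₁ z + wDzBar (fun w => (u w : ℂ)) z * a₁ z
        + b₂ z * (starRingEnd ℂ) (σ z))
    (hB₂ : B₂ = fun z => wDzBar b₂ z + wDzBar (fun w => (u w : ℂ)) z * a₂ z
        - b₁ z * (starRingEnd ℂ) (σ z)) :
    ∀ z ∈ U,
      wDzBar (fun w => Ap ((Real.exp (u w) / Real.sqrt 2 : ℝ) : ℂ)
          (a₁ w) (a₂ w) (b₁ w) (b₂ w)) z
        + (BKfun u σ z * Ap ((Real.exp (u z) / Real.sqrt 2 : ℝ) : ℂ)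
              (a₁ z) (a₂ z) (b₁ z) (b₂ z)
           - Ap ((Real.exp (u z) / Real.sqrt 2 : ℝ) : ℂ)
              (a₁ z) (a₂ z) (b₁ z) (b₂ z) * BKfun u σ z)
      = !![0, 0, 0, 0, 0;
           0, 0, 0, -A₁ z, -A₂ z;
           0, 0, 0, -(Complex.I * B₁ z), -(Complex.I * B₂ z);
           0, A₁ z, Complex.I * B₁ z, 0, 0;
           0, A₂ z, Complex.I * B₂ z, 0, 0] :=
  tension_of_gauss_map_general U u a₁ a₂ b₁ b₂ σ hu ha₁ ha₂ hb₁ hb₂ A₁ A₂ B₁ B₂ hA₁ hA₂ hB₁ hB₂
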